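/- arXiv:2510.24555 — 9 statements merged into one kernel-verified Lean document; each statement's English description precedes it below -/
import Mathlib

section
/- For every tuple (x₁,…,x₇) ∈ ℂ⁷ there exists a 3×3 complex matrix A = (a_{ij}) such that x₁ = a₁₁, x₂ = a₂₂, x₃ = a₁₁a₂₂ − a₁₂a₂₁, x₄ = a₃₃, x₅ = a₁₁a₃₃ − a₁₃a₃₁, x₆ = a₂₂a₃₃ − a₂₃a₃₂, and x₇ = det A. -/
/-- Auxiliary: we can always find six entries with prescribed pairwise products
and prescribed value of the mixed cubic form. -/
lemma solve6_aux (p P r D : ℂ) :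
    ∃ a b c d e f : ℂ, a*b = p ∧ c*d = P ∧ e*f = r ∧ a*e*d + c*b*f = D := by
  by_cases hp : p = 0
  · by_cases hP : P = 0
    · exact ⟨0, 1, D, 0, r, 1, by simp [hp], by simp [hP], by ring, by ring⟩
    · exact ⟨0, D/P, P, 1, r, 1, by simp [hp], by ring, by ring, by field_simp; ring⟩
  · by_cases hr : r = 0
    · exact ⟨p, 1, P, 1, D/p, 0, by ring, by ring, by simp [hr], by field_simp; ring⟩
    · obtain ⟨s, hs⟩ := IsAlgClosed.exists_pow_nat_eq (D^2 - 4*(p*r)*P) two_pos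
      refine ⟨p, 1, D - p*r*((D+s)/(2*(p*r))), (D+s)/(2*(p*r)), r, 1, by ring, ?_, by ring, by ring⟩
      field_simp
      linear_combination (-1) * hs

/-- Auxiliary: build the matrix from such entries. -/
lemma key_aux (x₁ x₂ x₃ x₄ x₅ x₆ x₇ a b c d e f : ℂ)
    (h1 : a*b = x₁*x₂ - x₃) (h2 : c*d = x₁*x₄ - x₅) (h3 : e*f = x₂*x₄ - x₆)
    (h4 : a*e*d + c*b*f =
      x₇ - x₁*x₂*x₄ + (x₁*x₄-x₅)*x₂ + x₁*(x₂*x₄-x₆) + (x₁*x₂-x₃)*x₄) :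
    ∃ A : Matrix (Fin 3) (Fin 3) ℂ,
      x₁ = A 0 0 ∧ x₂ = A 1 1 ∧ x₃ = A 0 0 * A 1 1 - A 0 1 * A 1 0 ∧
      x₄ = A 2 2 ∧ x₅ = A 0 0 * A 2 2 - A 0 2 * A 2 0 ∧
      x₆ = A 1 1 * A 2 2 - A 1 2 * A 2 1 ∧ x₇ = A.det := by
  refine ⟨!![x₁,a,c; b,x₂,e; d,f,x₄], ?_, ?_, ?_, ?_, ?_, ?_, ?_⟩ <;>
    simp [Matrix.det_fin_three]
  · linear_combination h1
  · linear_combination h2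
  · linear_combination h3
  · linear_combination x₄*h1 + x₂*h2 + x₁*h3 - h4

theorem stmt_1 (x₁ x₂ x₃ x₄ x₅ x₆ x₇ : ℂ) :
    ∃ A : Matrix (Fin 3) (Fin 3) ℂ,
      x₁ = A 0 0 ∧ x₂ = A 1 1 ∧ x₃ = A 0 0 * A 1 1 - A 0 1 * A 1 0 ∧
      x₄ = A 2 2 ∧ x₅ = A 0 0 * A 2 2 - A 0 2 * A 2 0 ∧
      x₆ = A 1 1 * A 2 2 - A 1 2 * A 2 1 ∧ x₇ = A.det := by
  obtain ⟨a, b, c, d, e, f, h1, h2, h3, h4⟩ :=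
    solve6_aux (x₁*x₂ - x₃) (x₁*x₄ - x₅) (x₂*x₄ - x₆)
      (x₇ - x₁*x₂*x₄ + (x₁*x₄-x₅)*x₂ + x₁*(x₂*x₄-x₆) + (x₁*x₂-x₃)*x₄)
  exact key_aux x₁ x₂ x₃ x₄ x₅ x₆ x₇ a b c d e f h1 h2 h3 h4
end

section
/- If A is a 3×3 complex matrix with operator norm ‖A‖ < 1, then for all z₁, z₂, z₃ in the closed unit disc of ℂ, det(I₃ − A·diag(z₁,z₂,z₃)) ≠ 0. Consequently, setting x₁=a₁₁, x₂=a₂₂, x₃=a₁₁a₂₂−a₁₂a₂₁, x₄=a₃₃, x₅=a₁₁a₃₃−a₁₃a₃₁, x₆=a₂₂a₃₃−a₂₃a₃₂, x₇=det A, the polynomial R_x(z) = 1 − x₁z₁ − x₂z₂ + x₃z₁z₂ − x₄z₃ + x₅z₁z₃ + x₆z₂z₃ − x₇z₁z₂z₃ has no zeros in the closed unit tridisc. -/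
lemma diag_norm_le_aux (w : Fin 3 → ℂ) (hw : ∀ i, ‖w i‖ ≤ 1) :
    ‖Matrix.toEuclideanCLM (𝕜 := ℂ) (Matrix.diagonal w)‖ ≤ 1 := by
  apply ContinuousLinearMap.opNorm_le_bound _ zero_le_one
  intro v
  rw [one_mul]
  have h : ∀ x : EuclideanSpace ℂ (Fin 3), ‖x‖ = Real.sqrt (∑ i, ‖x i‖^2) := by
    intro x; rw [EuclideanSpace.norm_eq]
  rw [h, h]
  apply Real.sqrt_le_sqrt
  apply Finset.sum_le_sum
  intro i _
  have hdi : (Matrix.toEuclideanCLM (𝕜 := ℂ) (Matrix.diagonal w)) v i = w i * v i := by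
    have h2 := congrFun (Matrix.ofLp_toEuclideanCLM (𝕜 := ℂ) (Matrix.diagonal w) v) i
    simpa [Matrix.mulVec_diagonal] using h2
  rw [hdi]
  simp only [norm_mul, mul_pow]
  calc ‖w i‖^2 * ‖v i‖^2 ≤ 1 * ‖v i‖^2 := by
        apply mul_le_mul_of_nonneg_right _ (by positivity)
        have := hw i
        nlinarith [norm_nonneg (w i)]
    _ = ‖v i‖^2 := one_mul _

theorem stmt_2 (A : Matrix (Fin 3) (Fin 3) ℂ)
    (hA : ‖Matrix.toEuclideanCLM (𝕜 := ℂ) A‖ < 1)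
    (x₁ x₂ x₃ x₄ x₅ x₆ x₇ : ℂ)
    (hx₁ : x₁ = A 0 0) (hx₂ : x₂ = A 1 1)
    (hx₃ : x₃ = A 0 0 * A 1 1 - A 0 1 * A 1 0)
    (hx₄ : x₄ = A 2 2)
    (hx₅ : x₅ = A 0 0 * A 2 2 - A 0 2 * A 2 0)
    (hx₆ : x₆ = A 1 1 * A 2 2 - A 1 2 * A 2 1)
    (hx₇ : x₇ = A.det) :
    ∀ z₁ z₂ z₃ : ℂ, ‖z₁‖ ≤ 1 → ‖z₂‖ ≤ 1 → ‖z₃‖ ≤ 1 →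
      (1 - A * Matrix.diagonal ![z₁, z₂, z₃]).det ≠ 0 ∧
      1 - x₁ * z₁ - x₂ * z₂ + x₃ * (z₁ * z₂) - x₄ * z₃ + x₅ * (z₁ * z₃)
        + x₆ * (z₂ * z₃) - x₇ * (z₁ * z₂ * z₃) ≠ 0 := by
  intro z₁ z₂ z₃ h1 h2 h3
  set D : Matrix (Fin 3) (Fin 3) ℂ := Matrix.diagonal ![z₁, z₂, z₃] with hD
  have hw : ∀ i, ‖(![z₁, z₂, z₃] i)‖ ≤ 1 := by
    intro i; fin_cases i <;> simpa
  have hnorm : ‖Matrix.toEuclideanCLM (𝕜 := ℂ) (A * D)‖ < 1 := by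
    rw [_root_.map_mul]
    calc ‖Matrix.toEuclideanCLM (𝕜 := ℂ) A * Matrix.toEuclideanCLM (𝕜 := ℂ) D‖
        ≤ ‖Matrix.toEuclideanCLM (𝕜 := ℂ) A‖ * ‖Matrix.toEuclideanCLM (𝕜 := ℂ) D‖ :=
          norm_mul_le _ _
      _ ≤ ‖Matrix.toEuclideanCLM (𝕜 := ℂ) A‖ * 1 := by
          apply mul_le_mul_of_nonneg_left (diag_norm_le_aux _ hw) (norm_nonneg _)
      _ < 1 := by rwa [mul_one]
  have hunit : IsUnit (Matrix.toEuclideanCLM (𝕜 := ℂ) (1 - A * D)) := by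
    rw [map_sub, _root_.map_one]
    exact (Units.oneSub _ hnorm).isUnit
  have hU : IsUnit (1 - A * D) := by
    have := hunit.map (Matrix.toEuclideanCLM (𝕜 := ℂ)).symm
    simpa using this
  have hdet : (1 - A * D).det ≠ 0 := ((Matrix.isUnit_iff_isUnit_det _).mp hU).ne_zero
  refine ⟨hdet, ?_⟩
  have heq : (1 - A * D).det =
      1 - x₁ * z₁ - x₂ * z₂ + x₃ * (z₁ * z₂) - x₄ * z₃ + x₅ * (z₁ * z₃)
        + x₆ * (z₂ * z₃) - x₇ * (z₁ * z₂ * z₃) := by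
    subst hx₁ hx₂ hx₃ hx₄ hx₅ hx₆ hx₇
    rw [hD, Matrix.det_fin_three, Matrix.det_fin_three]
    simp [Matrix.mul_apply, Matrix.one_apply, Fin.sum_univ_three, Matrix.diagonal]
    ring
  rw [← heq]
  exact hdet
end

section
/- Let (x₁,…,x₇) ∈ ℂ⁷ and suppose R_x(z₁,z₂,z₃) = 1 − x₁z₁ − x₂z₂ + x₃z₁z₂ − x₄z₃ + x₅z₁z₃ + x₆z₂z₃ − x₇z₁z₂z₃ ≠ 0 for all (z₁,z₂,z₃) in the open unit tridisc. Then |x₁| ≤ 1, |x₂| ≤ 1, and |x₄| ≤ 1. -/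
lemma aux_one_sub_mul (a : ℂ) (h : ∀ z : ℂ, ‖z‖ < 1 → 1 - a * z ≠ 0) :
    ‖a‖ ≤ 1 := by
  by_contra hc
  push_neg at hc
  have ha : a ≠ 0 := by
    intro h0; rw [h0] at hc; simp at hc; linarith
  have habs : ‖a⁻¹‖ < 1 := by
    rw [norm_inv]
    rw [inv_lt_one_iff₀]
    right; exact hc
  exact h a⁻¹ habs (by field_simp; ring)

theorem stmt_7 (x₁ x₂ x₃ x₄ x₅ x₆ x₇ : ℂ)
    (h : ∀ z₁ z₂ z₃ : ℂ, ‖z₁‖ < 1 → ‖z₂‖ < 1 → ‖z₃‖ < 1 →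
      1 - x₁ * z₁ - x₂ * z₂ + x₃ * (z₁ * z₂) - x₄ * z₃ + x₅ * (z₁ * z₃)
        + x₆ * (z₂ * z₃) - x₇ * (z₁ * z₂ * z₃) ≠ 0) :
    ‖x₁‖ ≤ 1 ∧ ‖x₂‖ ≤ 1 ∧ ‖x₄‖ ≤ 1 := by
  refine ⟨aux_one_sub_mul x₁ fun z hz => ?_, aux_one_sub_mul x₂ fun z hz => ?_,
    aux_one_sub_mul x₄ fun z hz => ?_⟩
  · have := h z 0 0 hz (by simp) (by simp); simpa using this
  · have := h 0 z 0 (by simp) hz (by simp); simpa using this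
  · have := h 0 0 z (by simp) (by simp) hz; simpa using this
end

section
/- Let (x₁,…,x₇) ∈ ℂ⁷ and suppose R_x(z₁,z₂,z₃) = 1 − x₁z₁ − x₂z₂ + x₃z₁z₂ − x₄z₃ + x₅z₁z₃ + x₆z₂z₃ − x₇z₁z₂z₃ ≠ 0 for all (z₁,z₂,z₃) in the closed unit tridisc. Then |x₁| < 1, |x₂| < 1, and |x₄| < 1. -/
lemma aux_abs_lt (a : ℂ) (h : ∀ z : ℂ, ‖z‖ ≤ 1 → 1 - a * z ≠ 0) :
    ‖a‖ < 1 := by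
  by_contra hc
  push_neg at hc
  have ha : a ≠ 0 := by
    intro h0
    rw [h0] at hc
    simp at hc
    linarith
  have hz : ‖a⁻¹‖ ≤ 1 := by
    rw [norm_inv]
    exact inv_le_one_of_one_le₀ hc
  exact h a⁻¹ hz (by field_simp; simp)

theorem stmt_8 (x₁ x₂ x₃ x₄ x₅ x₆ x₇ : ℂ)
    (h : ∀ z₁ z₂ z₃ : ℂ, ‖z₁‖ ≤ 1 → ‖z₂‖ ≤ 1 → ‖z₃‖ ≤ 1 →
      1 - x₁ * z₁ - x₂ * z₂ + x₃ * (z₁ * z₂) - x₄ * z₃ + x₅ * (z₁ * z₃)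
        + x₆ * (z₂ * z₃) - x₇ * (z₁ * z₂ * z₃) ≠ 0) :
    ‖x₁‖ < 1 ∧ ‖x₂‖ < 1 ∧ ‖x₄‖ < 1 := by
  refine ⟨aux_abs_lt x₁ fun z hz => ?_, aux_abs_lt x₂ fun z hz => ?_,
    aux_abs_lt x₄ fun z hz => ?_⟩
  · have := h z 0 0 hz (by simp) (by simp)
    simpa using this
  · have := h 0 z 0 (by simp) hz (by simp)
    simpa using this
  · have := h 0 0 z (by simp) (by simp) hz
    simpa using this
end

section
/- Let (x₁,…,x₇) ∈ ℂ⁷. Then R_x(z₁,z₂,z₃) ≠ 0 for all (z₁,z₂,z₃) in the closed unit tridisc if and only if: (i) 1 − x₁z₁ ≠ 0 for all z₁ in the closed unit disc, and (ii) for every z₁ in the closed unit disc, the triple ((x₂ − z₁x₃)/(1 − x₁z₁), (x₄ − z₁x₅)/(1 − x₁z₁), (x₆ − z₁x₇)/(1 − x₁z₁)) =: (u₁,u₂,u₃) satisfies 1 − u₁z₂ − u₂z₃ + u₃z₂z₃ ≠ 0 for all z₂, z₃ in the closed unit disc. -/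
theorem stmt_10 (x₁ x₂ x₃ x₄ x₅ x₆ x₇ : ℂ) :
    (∀ z₁ z₂ z₃ : ℂ, ‖z₁‖ ≤ 1 → ‖z₂‖ ≤ 1 → ‖z₃‖ ≤ 1 →
      1 - x₁ * z₁ - x₂ * z₂ + x₃ * (z₁ * z₂) - x₄ * z₃ + x₅ * (z₁ * z₃)
        + x₆ * (z₂ * z₃) - x₇ * (z₁ * z₂ * z₃) ≠ 0) ↔
    ((∀ z₁ : ℂ, ‖z₁‖ ≤ 1 → 1 - x₁ * z₁ ≠ 0) ∧
      (∀ z₁ : ℂ, ‖z₁‖ ≤ 1 →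
        ∀ z₂ z₃ : ℂ, ‖z₂‖ ≤ 1 → ‖z₃‖ ≤ 1 →
          1 - ((x₂ - z₁ * x₃) / (1 - x₁ * z₁)) * z₂
            - ((x₄ - z₁ * x₅) / (1 - x₁ * z₁)) * z₃
            + ((x₆ - z₁ * x₇) / (1 - x₁ * z₁)) * (z₂ * z₃) ≠ 0)) := by
  have key : ∀ z₁ z₂ z₃ : ℂ, 1 - x₁ * z₁ ≠ 0 →
      1 - x₁ * z₁ - x₂ * z₂ + x₃ * (z₁ * z₂) - x₄ * z₃ + x₅ * (z₁ * z₃)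
        + x₆ * (z₂ * z₃) - x₇ * (z₁ * z₂ * z₃)
      = (1 - x₁ * z₁) * (1 - ((x₂ - z₁ * x₃) / (1 - x₁ * z₁)) * z₂
            - ((x₄ - z₁ * x₅) / (1 - x₁ * z₁)) * z₃
            + ((x₆ - z₁ * x₇) / (1 - x₁ * z₁)) * (z₂ * z₃)) := by
    intro z₁ z₂ z₃ h
    field_simp
    ring
  constructor
  · intro h
    have hi : ∀ z₁ : ℂ, ‖z₁‖ ≤ 1 → 1 - x₁ * z₁ ≠ 0 := by
      intro z₁ hz
      have := h z₁ 0 0 hz (by simp) (by simp)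
      simpa using this
    refine ⟨hi, ?_⟩
    intro z₁ hz₁ z₂ z₃ hz₂ hz₃ hc
    apply h z₁ z₂ z₃ hz₁ hz₂ hz₃
    rw [key z₁ z₂ z₃ (hi z₁ hz₁), hc, mul_zero]
  · rintro ⟨h1, h2⟩ z₁ z₂ z₃ hz₁ hz₂ hz₃
    rw [key z₁ z₂ z₃ (h1 z₁ hz₁)]
    exact mul_ne_zero (h1 z₁ hz₁) (h2 z₁ hz₁ z₂ z₃ hz₂ hz₃)
end

section
/- Let (x₁,…,x₇) ∈ ℂ⁷. Then R_x(z₁,z₂,z₃) ≠ 0 for all (z₁,z₂,z₃) in the closed unit tridisc if and only if for every η with |η| = 1 and all z₁, z₂ in the closed unit disc, (η x₆ z₂² − (x₂ + η x₄) z₂ + 1) − z₁ (η x₇ z₂² − (x₃ + η x₅) z₂ + x₁) ≠ 0. -/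
open Complex

lemma finish_diag (A B C D q : ℂ) (hden : B + D * q ≠ 0)
    (habs : ‖(A + C * q) / (B + D * q)‖ = ‖q‖)
    (hq : ‖q‖ ≤ 1)
    (H : ∀ p q : ℂ, ‖p‖ = ‖q‖ → ‖q‖ ≤ 1 →
      A + B * p + C * q + D * (p * q) ≠ 0) : False := by
  apply H (-((A + C * q) / (B + D * q))) q (by rwa [norm_neg]) hq
  have e : A + B * -((A + C * q) / (B + D * q)) + C * q + D * (-((A + C * q) / (B + D * q)) * q)
      = (A + C * q) - (A + C * q) / (B + D * q) * (B + D * q) := by ring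
  rw [e, div_mul_cancel₀ _ hden, sub_self]

lemma key' (A B C D : ℂ)
    (H : ∀ p q : ℂ, ‖p‖ = ‖q‖ → ‖q‖ ≤ 1 →
      A + B * p + C * q + D * (p * q) ≠ 0)
    (a b : ℂ) (hab : ‖a‖ ≤ ‖b‖) (hb : ‖b‖ ≤ 1) :
    A + B * a + C * b + D * (a * b) ≠ 0 := by
  intro hf
  rcases eq_or_lt_of_le hab with heq | hlt
  · exact H a b heq hb hf
  have hA : A ≠ 0 := by
    have := H 0 0 rfl (by simp)
    simpa using this
  have hdenb : B + D * b ≠ 0 := by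
    intro h0
    have hACb : A + C * b = 0 := by linear_combination hf - a * h0
    exact H b b rfl hb (by linear_combination hACb + b * h0)
  have hquot : (A + C * b) / (B + D * b) = -a := by
    rw [div_eq_iff hdenb]
    linear_combination hf
  by_cases hcase : ∀ z : ℂ, ‖z‖ ≤ ‖b‖ → B + D * z ≠ 0
  · -- denominator never vanishes on the disc of radius |b|
    set φ : ℝ → ℝ := fun t =>
      ‖(A + C * ((t : ℂ) * b)) / (B + D * ((t : ℂ) * b))‖
        - ‖(t : ℂ) * b‖ with hφ
    have habst : ∀ t : ℝ, t ∈ Set.Icc (0:ℝ) 1 → ‖(t : ℂ) * b‖ ≤ ‖b‖ := by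
      intro t ht
      rw [norm_mul, Complex.norm_real, Real.norm_eq_abs]
      nlinarith [norm_nonneg b, _root_.abs_of_nonneg ht.1, ht.2]
    have hcont : ContinuousOn φ (Set.Icc (0:ℝ) 1) := by
      apply ContinuousOn.sub
      · apply continuous_norm.comp_continuousOn
        apply ContinuousOn.div
        · fun_prop
        · fun_prop
        · intro t ht
          exact hcase _ (habst t ht)
      · exact (continuous_norm.comp (by fun_prop)).continuousOn
    have hφ0 : 0 < φ 0 := by
      have hB : B + D * ((0:ℝ):ℂ) * b ≠ 0 := by
        have := hcase 0 (by simpa using norm_nonneg b)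
        simpa using this
      simp only [hφ, Complex.ofReal_zero, zero_mul, mul_zero, norm_zero, sub_zero]
      simp only [norm_div]
      apply div_pos
      · simpa [norm_pos_iff] using hA
      · simp only [Complex.ofReal_zero, zero_mul, mul_zero] at hB
        simpa [norm_pos_iff] using hB
    have hφ1 : φ 1 < 0 := by
      simp only [hφ, Complex.ofReal_one, one_mul, hquot, norm_neg]
      linarith
    have h0mem : (0:ℝ) ∈ Set.Icc (φ 1) (φ 0) := ⟨le_of_lt hφ1, le_of_lt hφ0⟩
    obtain ⟨t, ht, hφt⟩ := intermediate_value_Icc' (by norm_num : (0:ℝ) ≤ 1) hcont h0mem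
    have hq : ‖(t:ℂ) * b‖ ≤ 1 := (habst t ht).trans hb
    refine finish_diag A B C D ((t:ℂ) * b) (hcase _ (habst t ht)) ?_ hq H
    have : φ t = 0 := hφt
    simp only [hφ] at this
    linarith
  · push_neg at hcase
    obtain ⟨p, hp, hdenp⟩ := hcase
    have hD : D ≠ 0 := by
      intro h
      rw [h] at hdenp hdenb
      simp at hdenp
      simp [hdenp] at hdenb
    have hbp : b - p ≠ 0 := by
      intro h
      rw [sub_eq_zero] at h
      exact hdenb (h ▸ hdenp)
    have hN : A + C * p ≠ 0 := by
      intro h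
      exact H p p rfl (hp.trans hb) (by linear_combination h + p * hdenp)
    set K := ‖A + C * p‖ with hK
    have hKpos : 0 < K := by simpa [hK, norm_pos_iff] using hN
    have hCpos : 0 < ‖C‖ * ‖b - p‖ + 1 := by positivity
    have hDbp : 0 < ‖D‖ * ‖b - p‖ := by
      apply mul_pos <;> simpa [norm_pos_iff]
    set ε : ℝ := min (min (K / (2 * (‖C‖ * ‖b - p‖ + 1)))
      (K / (2 * (‖D‖ * ‖b - p‖) * (‖b‖ + 1)))) 1 with hε
    have hε0 : 0 < ε := by
      apply lt_min (lt_min _ _) one_pos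
      · positivity
      · positivity
    have hε1 : ε ≤ 1 := min_le_right _ _
    have hεC : ε * (‖C‖ * ‖b - p‖) ≤ K / 2 := by
      have h1 : ε ≤ K / (2 * (‖C‖ * ‖b - p‖ + 1)) :=
        (min_le_left _ _).trans (min_le_left _ _)
      rw [le_div_iff₀ (by positivity)] at h1
      nlinarith [norm_nonneg C, norm_nonneg (b - p)]
    have hεD : ε * (‖D‖ * ‖b - p‖) * ‖b‖ < K / 2 := by
      have h1 : ε ≤ K / (2 * (‖D‖ * ‖b - p‖) * (‖b‖ + 1)) :=
        (min_le_left _ _).trans (min_le_right _ _)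
      rw [le_div_iff₀ (by positivity)] at h1
      nlinarith [norm_nonneg b, hDbp, hε0]
    set γ : ℝ → ℂ := fun t => b + (t : ℂ) * (p - b) with hγ
    have hdenγ : ∀ t : ℝ, B + D * γ t = D * ((1:ℂ) - t) * (b - p) := by
      intro t
      simp only [hγ]
      linear_combination hdenp
    have habsγ : ∀ t : ℝ, 0 ≤ t → t ≤ 1 → ‖γ t‖ ≤ ‖b‖ := by
      intro t ht0 ht1
      have : γ t = ((1:ℝ) - t : ℝ) * b + (t:ℝ) * p := by
        simp only [hγ]; push_cast; ring
      rw [this]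
      calc ‖((1:ℝ) - t : ℝ) * b + (t:ℝ) * p‖
          ≤ ‖((1:ℝ) - t : ℝ) * b‖ + ‖(t:ℝ) * p‖ :=
            norm_add_le _ _
        _ = (1 - t) * ‖b‖ + t * ‖p‖ := by
            rw [norm_mul, norm_mul, Complex.norm_real, Real.norm_eq_abs, Complex.norm_real, Real.norm_eq_abs,
              _root_.abs_of_nonneg ht0, _root_.abs_of_nonneg (by linarith)]
        _ ≤ ‖b‖ := by nlinarith [norm_nonneg p]
    have hdenγne : ∀ t : ℝ, t < 1 → B + D * γ t ≠ 0 := by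
      intro t ht
      rw [hdenγ]
      apply mul_ne_zero (mul_ne_zero hD _) hbp
      intro h
      have : ((1 - t : ℝ) : ℂ) = 0 := by push_cast; linear_combination h
      rw [Complex.ofReal_eq_zero] at this
      linarith
    set t₁ : ℝ := 1 - ε with ht₁
    set φ : ℝ → ℝ := fun t =>
      ‖(A + C * γ t) / (B + D * γ t)‖ - ‖γ t‖ with hφ
    have hcont : ContinuousOn φ (Set.Icc (0:ℝ) t₁) := by
      apply ContinuousOn.sub
      · apply continuous_norm.comp_continuousOn
        apply ContinuousOn.div
        · fun_prop
        · fun_prop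
        · intro t ht
          exact hdenγne t (by simp only [ht₁] at ht ⊢; linarith [ht.2])
      · exact (continuous_norm.comp (by fun_prop)).continuousOn
    have hγ0 : γ 0 = b := by simp [hγ]
    have hφ0 : φ 0 < 0 := by
      simp only [hφ, hγ0, hquot, norm_neg]
      linarith
    have hφt₁ : 0 < φ t₁ := by
      have hnum : K / 2 ≤ ‖A + C * γ t₁‖ := by
        have : A + C * γ t₁ = (A + C * p) + (ε : ℂ) * (C * (b - p)) := by
          simp only [hγ, ht₁]; push_cast; ring
        rw [this]
        have h1 : ‖(A + C * p)‖ - ‖(ε : ℂ) * (C * (b - p))‖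
            ≤ ‖(A + C * p) + (ε : ℂ) * (C * (b - p))‖ := by
          have hadd := norm_add_le ((A + C * p) + (ε : ℂ) * (C * (b - p)))
            (-((ε : ℂ) * (C * (b - p))))
          rw [add_neg_cancel_right, norm_neg] at hadd
          linarith
        have h2 : ‖(ε : ℂ) * (C * (b - p))‖
            = ε * (‖C‖ * ‖b - p‖) := by
          rw [norm_mul, norm_mul, Complex.norm_real, Real.norm_eq_abs, _root_.abs_of_nonneg hε0.le]
        rw [h2] at h1
        linarith
      have hden : ‖B + D * γ t₁‖ = ε * (‖D‖ * ‖b - p‖) := by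
        rw [hdenγ]
        have : ((1:ℂ) - (t₁:ℝ)) = (ε : ℂ) := by simp only [ht₁]; push_cast; ring
        rw [this, norm_mul, norm_mul, Complex.norm_real, Real.norm_eq_abs, _root_.abs_of_nonneg hε0.le]
        ring
      have hdpos : 0 < ε * (‖D‖ * ‖b - p‖) := by positivity
      have hquotbig : ‖b‖ < ‖(A + C * γ t₁) / (B + D * γ t₁)‖ := by
        rw [norm_div, hden, lt_div_iff₀ hdpos]
        calc ‖b‖ * (ε * (‖D‖ * ‖b - p‖))
            = ε * (‖D‖ * ‖b - p‖) * ‖b‖ := by ring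
          _ < K / 2 := hεD
          _ ≤ ‖A + C * γ t₁‖ := hnum
      have hγb : ‖γ t₁‖ ≤ ‖b‖ :=
        habsγ t₁ (by simp only [ht₁]; linarith) (by simp only [ht₁]; linarith)
      simp only [hφ]
      linarith
    have h0mem : (0:ℝ) ∈ Set.Icc (φ 0) (φ t₁) := ⟨le_of_lt hφ0, le_of_lt hφt₁⟩
    have ht₁0 : (0:ℝ) ≤ t₁ := by simp only [ht₁]; linarith
    obtain ⟨t, ht, hφt⟩ := intermediate_value_Icc ht₁0 hcont h0mem
    have htlt : t < 1 := by
      have := ht.2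
      simp only [ht₁] at this
      linarith
    have hq : ‖γ t‖ ≤ 1 :=
      (habsγ t ht.1 (by linarith)).trans hb
    refine finish_diag A B C D (γ t) (hdenγne t htlt) ?_ hq H
    have : φ t = 0 := hφt
    simp only [hφ] at this
    linarith

lemma key (A B C D : ℂ)
    (H : ∀ p q : ℂ, ‖p‖ = ‖q‖ → ‖q‖ ≤ 1 →
      A + B * p + C * q + D * (p * q) ≠ 0)
    (a b : ℂ) (ha : ‖a‖ ≤ 1) (hb : ‖b‖ ≤ 1) :
    A + B * a + C * b + D * (a * b) ≠ 0 := by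
  rcases le_total (‖a‖) (‖b‖) with h | h
  · exact key' A B C D H a b h hb
  · have H' : ∀ p q : ℂ, ‖p‖ = ‖q‖ → ‖q‖ ≤ 1 →
        A + C * p + B * q + D * (p * q) ≠ 0 := by
      intro p q hpq hq h0
      exact H q p hpq.symm ((le_of_eq hpq).trans hq) (by linear_combination h0)
    intro h0
    exact key' A C B D H' b a h ha (by linear_combination h0)

theorem stmt_12 (x₁ x₂ x₃ x₄ x₅ x₆ x₇ : ℂ) :
    (∀ z₁ z₂ z₃ : ℂ, ‖z₁‖ ≤ 1 → ‖z₂‖ ≤ 1 → ‖z₃‖ ≤ 1 →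
      1 - x₁ * z₁ - x₂ * z₂ + x₃ * (z₁ * z₂) - x₄ * z₃ + x₅ * (z₁ * z₃)
        + x₆ * (z₂ * z₃) - x₇ * (z₁ * z₂ * z₃) ≠ 0) ↔
    (∀ η : ℂ, ‖η‖ = 1 →
      ∀ z₁ z₂ : ℂ, ‖z₁‖ ≤ 1 → ‖z₂‖ ≤ 1 →
        (η * x₆ * z₂ ^ 2 - (x₂ + η * x₄) * z₂ + 1)
          - z₁ * (η * x₇ * z₂ ^ 2 - (x₃ + η * x₅) * z₂ + x₁) ≠ 0) := by
  constructor
  · intro h η hη z₁ z₂ hz₁ hz₂ h0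
    refine h z₁ z₂ (η * z₂) hz₁ hz₂ ?_ ?_
    · rw [norm_mul, hη, one_mul]; exact hz₂
    · linear_combination h0
  · intro h z₁ z₂ z₃ h1 h2 h3
    have H : ∀ p q : ℂ, ‖p‖ = ‖q‖ → ‖q‖ ≤ 1 →
        (1 - x₁ * z₁) + (x₃ * z₁ - x₂) * p + (x₅ * z₁ - x₄) * q
          + (x₆ - x₇ * z₁) * (p * q) ≠ 0 := by
      intro p q hpq hq h0
      by_cases hp : p = 0
      · have hq0 : q = 0 := by
          have : ‖q‖ = 0 := by rw [← hpq, hp, norm_zero]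
          simpa using this
        refine h 1 (by simp) z₁ 0 h1 (by simp) ?_
        rw [hp, hq0] at h0
        linear_combination h0
      · have hple : ‖p‖ ≤ 1 := (le_of_eq hpq).trans hq
        have hη : ‖q / p‖ = 1 := by
          rw [norm_div, ← hpq, div_self ((norm_ne_zero_iff.mpr hp))]
        refine h (q / p) hη z₁ p h1 hple ?_
        have hqp : q / p * p = q := div_mul_cancel₀ q hp
        linear_combination h0 + (x₆ * p - x₄ + x₅ * z₁ - x₇ * (z₁ * p)) * hqp
    intro h0
    exact key (1 - x₁ * z₁) (x₃ * z₁ - x₂) (x₅ * z₁ - x₄) (x₆ - x₇ * z₁) H z₂ z₃ h2 h3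
      (by linear_combination h0)
end

section
/- Let A = (a_{ij}) be a 2×2 complex matrix and z ∈ ℂ with 1 − a₂₂z ≠ 0. Set M_A(z) = (a₁₁ − z·det A)/(1 − a₂₂z), γ(z) = a₂₁/(1 − a₂₂z), and η(z) = (1, z·γ(z))ᵀ ∈ ℂ². Then 1 − |M_A(z)|² = (1 − |z|²)·|γ(z)|² + η(z)* (I₂ − A*A) η(z). -/
open Matrix

set_option maxHeartbeats 2000000 in
theorem stmt_16 (A : Matrix (Fin 2) (Fin 2) ℂ) (z : ℂ) (hz : 1 - A 1 1 * z ≠ 0) :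
    (1 : ℂ) - (‖(A 0 0 - z * A.det) / (1 - A 1 1 * z)‖ : ℝ) ^ 2 =
      ((1 - (‖z‖ : ℝ) ^ 2) * (‖A 1 0 / (1 - A 1 1 * z)‖ : ℝ) ^ 2 : ℝ)
        + dotProduct (star ![1, z * (A 1 0 / (1 - A 1 1 * z))])
            ((1 - Aᴴ * A) *ᵥ ![1, z * (A 1 0 / (1 - A 1 1 * z))]) := by
  have habs : ∀ w : ℂ, ((‖w‖ : ℂ)) ^ 2 = (starRingEnd ℂ) w * w := fun w => by
    rw [mul_comm, Complex.mul_conj]; norm_cast; exact Complex.sq_norm w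
  simp only [dotProduct, Matrix.mulVec, Fin.sum_univ_two, Matrix.sub_apply,
    Matrix.mul_apply, Matrix.one_apply, Matrix.conjTranspose_apply, Matrix.det_fin_two,
    Matrix.cons_val_zero, Matrix.cons_val_one, Matrix.head_cons, Pi.star_apply,
    star_one, RCLike.star_def]
  push_cast
  rw [habs, habs, habs]
  set d : ℂ := 1 - A 1 1 * z with hd
  have hd' : (starRingEnd ℂ) d = 1 - (starRingEnd ℂ) (A 1 1) * (starRingEnd ℂ) z := by
    rw [hd]; simp
  set e : ℂ := (starRingEnd ℂ) d with he
  have hez : e ≠ 0 := by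
    rw [he]; simpa using star_ne_zero.mpr hz
  simp only [_root_.map_mul, map_div₀, ← he]
  field_simp
  simp only [hd', hd, map_sub, _root_.map_mul, _root_.map_one]
  ring
end

section
/- Let P be an n×n complex matrix written in block form P = [P₁₁ P₁₂; P₂₁ P₂₂] with respect to a decomposition ℂⁿ = ℂᵏ ⊕ ℂᵐ, and let X be a linear map from the second summand ℂᵐ to the second summand ℂᵐ (an m×m matrix) with operator norm ‖X‖ ≤ 1. If ‖P‖ < 1, then I − P₂₂X is invertible and the matrix Möbius transform M_P(X) = P₁₁ + P₁₂ X (I − P₂₂X)⁻¹ P₂₁ satisfies ‖M_P(X)‖ < 1. -/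
open Matrix

private lemma aux_sq_le (a b : ℝ) (ha : 0 ≤ a) (hb : 0 ≤ b) (h : a ^ 2 ≤ b ^ 2) : a ≤ b := by
  nlinarith [sq_nonneg (a - b), sq_nonneg (a + b)]

private lemma Matrix.toEuclideanCLM_piLp_equiv_symm {n : Type*} [Fintype n] [DecidableEq n]
    (A : Matrix n n ℂ) (x : n → ℂ) :
    Matrix.toEuclideanCLM (𝕜 := ℂ) A ((WithLp.equiv 2 (n → ℂ)).symm x) =
      (WithLp.equiv 2 (n → ℂ)).symm (Matrix.toLin' A x) := rfl

set_option maxHeartbeats 1000000 in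
theorem stmt_17 (k m : ℕ)
    (P₁₁ : Matrix (Fin k) (Fin k) ℂ) (P₁₂ : Matrix (Fin k) (Fin m) ℂ)
    (P₂₁ : Matrix (Fin m) (Fin k) ℂ) (P₂₂ : Matrix (Fin m) (Fin m) ℂ)
    (X : Matrix (Fin m) (Fin m) ℂ)
    (hX : ‖Matrix.toEuclideanCLM (𝕜 := ℂ) X‖ ≤ 1)
    (hP : ‖Matrix.toEuclideanCLM (𝕜 := ℂ)
      (Matrix.fromBlocks P₁₁ P₁₂ P₂₁ P₂₂ : Matrix (Fin k ⊕ Fin m) (Fin k ⊕ Fin m) ℂ)‖ < 1) :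
    IsUnit (1 - P₂₂ * X) ∧
      ‖Matrix.toEuclideanCLM (𝕜 := ℂ)
        (P₁₁ + P₁₂ * X * (1 - P₂₂ * X)⁻¹ * P₂₁)‖ < 1 := by
  set T := Matrix.toEuclideanCLM (𝕜 := ℂ)
      (Matrix.fromBlocks P₁₁ P₁₂ P₂₁ P₂₂ : Matrix (Fin k ⊕ Fin m) (Fin k ⊕ Fin m) ℂ) with hT
  set ek : (Fin k → ℂ) → EuclideanSpace ℂ (Fin k) :=
    fun a => (WithLp.equiv 2 (Fin k → ℂ)).symm a with hek
  set em : (Fin m → ℂ) → EuclideanSpace ℂ (Fin m) :=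
    fun a => (WithLp.equiv 2 (Fin m → ℂ)).symm a with hem
  set g : (Fin k → ℂ) → (Fin m → ℂ) → EuclideanSpace ℂ (Fin k ⊕ Fin m) :=
    fun a b => (WithLp.equiv 2 _).symm (Sum.elim a b) with hg
  have hgnorm : ∀ (a : Fin k → ℂ) (b : Fin m → ℂ),
      ‖g a b‖ ^ 2 = ‖ek a‖ ^ 2 + ‖em b‖ ^ 2 := by
    intro a b
    rw [hg, hek, hem]
    simp only [EuclideanSpace.norm_eq]
    rw [Real.sq_sqrt (by positivity), Real.sq_sqrt (by positivity),
      Real.sq_sqrt (by positivity)]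
    simp [Fintype.sum_sum_type]
  have hTapp : ∀ (a : Fin k → ℂ) (b : Fin m → ℂ),
      T (g a b) = g (P₁₁ *ᵥ a + P₁₂ *ᵥ b) (P₂₁ *ᵥ a + P₂₂ *ᵥ b) := by
    intro a b
    rw [hT, hg]
    rw [Matrix.toEuclideanCLM_piLp_equiv_symm]
    congr 1
    rw [Matrix.toLin'_apply, Matrix.fromBlocks_mulVec]
    simp
  have hXapp : ∀ b : Fin m → ℂ,
      Matrix.toEuclideanCLM (𝕜 := ℂ) X (em b) = em (X *ᵥ b) := by
    intro b
    rw [hem]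
    rw [Matrix.toEuclideanCLM_piLp_equiv_symm, Matrix.toLin'_apply]
  have hTnn : (0:ℝ) ≤ ‖T‖ := norm_nonneg _
  have hek0 : ‖ek (0 : Fin k → ℂ)‖ = 0 := by
    simp [hek]
  -- step 1 : norm of P₂₂ action
  have hP22 : ∀ b : Fin m → ℂ, ‖em (P₂₂ *ᵥ b)‖ ≤ ‖T‖ * ‖em b‖ := by
    intro b
    have h1 : T (g 0 b) = g (P₁₂ *ᵥ b) (P₂₂ *ᵥ b) := by
      rw [hTapp]; simp
    have h2 : ‖T (g 0 b)‖ ≤ ‖T‖ * ‖g 0 b‖ := T.le_opNorm _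
    rw [h1] at h2
    have h3 := hgnorm (P₁₂ *ᵥ b) (P₂₂ *ᵥ b)
    have h4 := hgnorm 0 b
    rw [hek0] at h4
    have hg0 : ‖g 0 b‖ ^ 2 = ‖em b‖ ^ 2 := by rw [h4]; ring
    have h6 : ‖em (P₂₂ *ᵥ b)‖ ^ 2 ≤ (‖T‖ * ‖em b‖) ^ 2 := by
      have hn := norm_nonneg (g (P₁₂ *ᵥ b) (P₂₂ *ᵥ b))
      have hn2 := sq_nonneg (‖ek (P₁₂ *ᵥ b)‖)
      have h2sq := pow_le_pow_left₀ hn h2 2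
      rw [mul_pow, hg0, h3] at h2sq
      rw [mul_pow]
      linarith
    exact aux_sq_le _ _ (norm_nonneg _) (by positivity) h6
  -- step 2 : invertibility
  have hnormP22X : ‖Matrix.toEuclideanCLM (𝕜 := ℂ) (P₂₂ * X)‖ < 1 := by
    have hb : ‖Matrix.toEuclideanCLM (𝕜 := ℂ) (P₂₂ * X)‖ ≤ ‖T‖ := by
      apply ContinuousLinearMap.opNorm_le_bound _ hTnn
      intro x
      have hx : x = em ((WithLp.equiv 2 (Fin m → ℂ)) x) := rfl
      rw [hx]
      have : Matrix.toEuclideanCLM (𝕜 := ℂ) (P₂₂ * X) (em ((WithLp.equiv 2 (Fin m → ℂ)) x))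
          = em (P₂₂ *ᵥ (X *ᵥ ((WithLp.equiv 2 (Fin m → ℂ)) x))) := by
        rw [hem]
        rw [Matrix.toEuclideanCLM_piLp_equiv_symm, Matrix.toLin'_apply,
          ← Matrix.mulVec_mulVec]
      rw [this]
      calc ‖em (P₂₂ *ᵥ (X *ᵥ (WithLp.equiv 2 (Fin m → ℂ)) x))‖
          ≤ ‖T‖ * ‖em (X *ᵥ (WithLp.equiv 2 (Fin m → ℂ)) x)‖ := hP22 _
        _ ≤ ‖T‖ * ‖em ((WithLp.equiv 2 (Fin m → ℂ)) x)‖ := by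
            apply mul_le_mul_of_nonneg_left _ hTnn
            rw [← hXapp]
            calc ‖Matrix.toEuclideanCLM (𝕜 := ℂ) X (em ((WithLp.equiv 2 (Fin m → ℂ)) x))‖
                ≤ ‖Matrix.toEuclideanCLM (𝕜 := ℂ) X‖ * ‖em ((WithLp.equiv 2 (Fin m → ℂ)) x)‖ :=
                  ContinuousLinearMap.le_opNorm _ _
              _ ≤ 1 * _ := by
                  apply mul_le_mul_of_nonneg_right hX (norm_nonneg _)
              _ = _ := one_mul _
    exact lt_of_le_of_lt hb hP
  have hUnitCLM : IsUnit (1 - Matrix.toEuclideanCLM (𝕜 := ℂ) (P₂₂ * X)) :=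
    ⟨Units.oneSub _ hnormP22X, rfl⟩
  have hUnit : IsUnit (1 - P₂₂ * X) := by
    have h1 : Matrix.toEuclideanCLM (𝕜 := ℂ) (1 - P₂₂ * X)
        = 1 - Matrix.toEuclideanCLM (𝕜 := ℂ) (P₂₂ * X) := by
      simp [map_sub]
    have h2 : IsUnit (Matrix.toEuclideanCLM (𝕜 := ℂ) (1 - P₂₂ * X)) := h1 ▸ hUnitCLM
    have h3 := h2.map (Matrix.toEuclideanCLM (𝕜 := ℂ) (n := Fin m)).symm
    simpa using h3
  refine ⟨hUnit, ?_⟩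
  -- step 3 : main estimate
  have hdet : IsUnit (1 - P₂₂ * X).det := (Matrix.isUnit_iff_isUnit_det _).mp hUnit
  have hkey : (1 - P₂₂ * X) * ((1 - P₂₂ * X)⁻¹ * P₂₁) = P₂₁ := by
    rw [← Matrix.mul_assoc, Matrix.mul_nonsing_inv _ hdet, Matrix.one_mul]
  set M : Matrix (Fin k) (Fin k) ℂ := P₁₁ + P₁₂ * X * (1 - P₂₂ * X)⁻¹ * P₂₁ with hM
  have hbound : ‖Matrix.toEuclideanCLM (𝕜 := ℂ) M‖ ≤ ‖T‖ := by
    apply ContinuousLinearMap.opNorm_le_bound _ hTnn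
    intro x
    set y : Fin k → ℂ := (WithLp.equiv 2 (Fin k → ℂ)) x with hy
    have hx : x = ek y := rfl
    set u : Fin m → ℂ := ((1 - P₂₂ * X)⁻¹ * P₂₁) *ᵥ y with hu
    set w : Fin m → ℂ := X *ᵥ u with hw
    -- key vector identity
    have eq1 : P₂₁ *ᵥ y + P₂₂ *ᵥ w = u := by
      have h : (1 - P₂₂ * X) *ᵥ u = P₂₁ *ᵥ y := by
        rw [hu, Matrix.mulVec_mulVec, hkey]
      rw [Matrix.sub_mulVec, Matrix.one_mulVec, ← Matrix.mulVec_mulVec, ← hw] at h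
      rw [← h]
      abel
    have eq2 : M *ᵥ y = P₁₁ *ᵥ y + P₁₂ *ᵥ w := by
      rw [hM, Matrix.add_mulVec]
      congr 1
      rw [Matrix.mul_assoc (P₁₂ * X), ← Matrix.mulVec_mulVec, ← hu,
        ← Matrix.mulVec_mulVec, ← hw]
    have hTg : T (g y w) = g (M *ᵥ y) u := by
      rw [hTapp, eq1, ← eq2]
    have h2 : ‖T (g y w)‖ ≤ ‖T‖ * ‖g y w‖ := T.le_opNorm _
    rw [hTg] at h2
    have h3 := hgnorm (M *ᵥ y) u
    have h4 := hgnorm y w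
    have hwu : ‖em w‖ ≤ ‖em u‖ := by
      rw [hw, ← hXapp]
      calc ‖Matrix.toEuclideanCLM (𝕜 := ℂ) X (em u)‖
          ≤ ‖Matrix.toEuclideanCLM (𝕜 := ℂ) X‖ * ‖em u‖ := ContinuousLinearMap.le_opNorm _ _
        _ ≤ 1 * ‖em u‖ := mul_le_mul_of_nonneg_right hX (norm_nonneg _)
        _ = ‖em u‖ := one_mul _
    have hT1 : ‖T‖ ≤ 1 := hP.le
    have h6 : ‖ek (M *ᵥ y)‖ ^ 2 ≤ (‖T‖ * ‖ek y‖) ^ 2 := by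
      have hn := norm_nonneg (g (M *ᵥ y) u)
      have hnu := norm_nonneg (em u)
      have hnw := norm_nonneg (em w)
      have hny := norm_nonneg (ek y)
      have h2sq := pow_le_pow_left₀ hn h2 2
      rw [mul_pow, h3, h4, mul_add] at h2sq
      have hwusq := pow_le_pow_left₀ hnw hwu 2
      have hTsq : ‖T‖ ^ 2 ≤ 1 := by nlinarith
      have hfin : ‖T‖ ^ 2 * ‖em w‖ ^ 2 ≤ ‖em u‖ ^ 2 := by nlinarith [sq_nonneg ‖em w‖]
      rw [mul_pow]
      linarith
    have h7 : ‖ek (M *ᵥ y)‖ ≤ ‖T‖ * ‖ek y‖ :=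
      aux_sq_le _ _ (norm_nonneg _) (by positivity) h6
    have happM : Matrix.toEuclideanCLM (𝕜 := ℂ) M x = ek (M *ᵥ y) := by
      rw [hx, hek]
      rw [Matrix.toEuclideanCLM_piLp_equiv_symm, Matrix.toLin'_apply]
    rw [happM, hx]
    exact h7
  exact lt_of_le_of_lt hbound hP
end

section
/- Let (x₁,…,x₇) ∈ ℂ⁷ satisfy R_x(z₁,z₂,z₃) ≠ 0 for all (z₁,z₂,z₃) in the open unit tridisc, and let 0 ≤ r < 1. Then the scaled point (x₁, r·x₂, r·x₃, r·x₄, r·x₅, r·x₆, r·x₇) also satisfies R_{(x₁,rx₂,…,rx₇)}(z₁,z₂,z₃) ≠ 0 for all (z₁,z₂,z₃) in the open unit tridisc. -/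
private lemma aux_bdd19 (α β : ℂ) (h : ∀ w : ℂ, ‖w‖ < 1 → α - w * β ≠ 0) :
    ‖β‖ ≤ ‖α‖ := by
  by_contra hc
  push_neg at hc
  have hβ : (0:ℝ) < ‖β‖ := lt_of_le_of_lt (norm_nonneg α) hc
  have hβ0 : β ≠ 0 := by
    intro h0; rw [h0] at hβ; simp at hβ
  have hw : ‖α / β‖ < 1 := by
    rw [norm_div, div_lt_one hβ]
    exact hc
  exact h (α / β) hw (by field_simp; ring)

private lemma aux_sc19 (C v : ℂ) (r : ℝ) (hr0 : 0 ≤ r) (hr1 : r ≤ 1)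
    (hv : ‖v‖ ≤ ‖C‖) :
    r * ‖C - v‖ ≤ ‖C - (r : ℂ) * v‖ := by
  have h1 : ‖C - v‖ ^ 2 = Complex.normSq (C - v) := Complex.sq_norm _
  have h2 : ‖C - (r : ℂ) * v‖ ^ 2 = Complex.normSq (C - (r : ℂ) * v) :=
    Complex.sq_norm _
  have e1 : Complex.normSq (C - v)
      = Complex.normSq C + Complex.normSq v - 2 * (C * starRingEnd ℂ v).re :=
    Complex.normSq_sub C v
  have e2 : Complex.normSq (C - (r : ℂ) * v)
      = Complex.normSq C + r ^ 2 * Complex.normSq v - 2 * (r * (C * starRingEnd ℂ v).re) := by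
    rw [Complex.normSq_sub]
    simp [Complex.normSq_mul, Complex.normSq_ofReal, mul_comm, Complex.mul_re,
      Complex.ofReal_re, Complex.ofReal_im]
    ring
  have hre : (C * starRingEnd ℂ v).re ≤ ‖C‖ * ‖v‖ := by
    calc (C * starRingEnd ℂ v).re ≤ ‖C * starRingEnd ℂ v‖ := Complex.re_le_norm _
    _ = ‖C‖ * ‖v‖ := by rw [norm_mul, Complex.norm_conj]
  have hre' : -(‖C‖ * ‖v‖) ≤ (C * starRingEnd ℂ v).re := by
    have := Complex.re_le_norm (-(C * starRingEnd ℂ v))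
    rw [Complex.neg_re, norm_neg, norm_mul, Complex.norm_conj] at this
    linarith
  have hCsq : Complex.normSq C = ‖C‖ ^ 2 := (Complex.sq_norm C).symm
  have hvsq : Complex.normSq v = ‖v‖ ^ 2 := (Complex.sq_norm v).symm
  have habsC : (0:ℝ) ≤ ‖C‖ := norm_nonneg _
  have habsv : (0:ℝ) ≤ ‖v‖ := norm_nonneg _
  have hsq : (r * ‖C - v‖) ^ 2 ≤ ‖C - (r : ℂ) * v‖ ^ 2 := by
    have expand : ‖C - (r : ℂ) * v‖ ^ 2 - (r * ‖C - v‖) ^ 2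
        = (1 - r ^ 2) * ‖C‖ ^ 2
          - 2 * r * (1 - r) * (C * starRingEnd ℂ v).re := by
      rw [mul_pow, h1, h2, e1, e2, hCsq, hvsq]; ring
    have hre2 : (C * starRingEnd ℂ v).re ≤ ‖C‖ ^ 2 := by
      nlinarith [mul_le_mul_of_nonneg_left hv habsC]
    have hmul : r * (1 - r) * (C * starRingEnd ℂ v).re
        ≤ r * (1 - r) * ‖C‖ ^ 2 :=
      mul_le_mul_of_nonneg_left hre2 (mul_nonneg hr0 (sub_nonneg.2 hr1))
    nlinarith [hmul, mul_nonneg (sq_nonneg (1 - r)) (sq_nonneg (‖C‖))]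
  have h0 : (0:ℝ) ≤ r * ‖C - v‖ := mul_nonneg hr0 (norm_nonneg _)
  have h0' : (0:ℝ) ≤ ‖C - (r : ℂ) * v‖ := norm_nonneg _
  have := Real.sqrt_le_sqrt hsq
  rwa [Real.sqrt_sq h0, Real.sqrt_sq h0'] at this

theorem stmt_19 (x₁ x₂ x₃ x₄ x₅ x₆ x₇ : ℂ) (r : ℝ) (hr0 : 0 ≤ r) (hr1 : r < 1)
    (h : ∀ z₁ z₂ z₃ : ℂ, ‖z₁‖ < 1 → ‖z₂‖ < 1 → ‖z₃‖ < 1 →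
      1 - x₁ * z₁ - x₂ * z₂ + x₃ * (z₁ * z₂) - x₄ * z₃ + x₅ * (z₁ * z₃)
        + x₆ * (z₂ * z₃) - x₇ * (z₁ * z₂ * z₃) ≠ 0) :
    ∀ z₁ z₂ z₃ : ℂ, ‖z₁‖ < 1 → ‖z₂‖ < 1 → ‖z₃‖ < 1 →
      1 - x₁ * z₁ - (r : ℂ) * x₂ * z₂ + (r : ℂ) * x₃ * (z₁ * z₂) - (r : ℂ) * x₄ * z₃
        + (r : ℂ) * x₅ * (z₁ * z₃) + (r : ℂ) * x₆ * (z₂ * z₃)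
        - (r : ℂ) * x₇ * (z₁ * z₂ * z₃) ≠ 0 := by
  intro z₁ z₂ z₃ h1 h2 h3
  set C : ℂ := 1 - x₁ * z₁ with hCdef
  set D : ℂ := x₂ - x₃ * z₁ with hDdef
  set E : ℂ := x₄ - x₅ * z₁ with hEdef
  set F : ℂ := x₆ - x₇ * z₁ with hFdef
  -- C ≠ 0
  have hC : C ≠ 0 := by
    have := h z₁ 0 0 h1 (by simp) (by simp)
    intro h0
    apply this
    rw [hCdef] at h0
    linear_combination h0
  have hCpos : (0:ℝ) < ‖C‖ := by
    simpa [norm_pos_iff] using hC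
  -- |D| ≤ |C|
  have hD : ‖D‖ ≤ ‖C‖ := by
    apply aux_bdd19
    intro w hw heq
    exact h z₁ w 0 h1 hw (by simp) (by rw [hCdef, hDdef] at heq; linear_combination heq)
  -- |E - z₂ F| ≤ |C - z₂ D|
  have hB : ‖E - z₂ * F‖ ≤ ‖C - z₂ * D‖ := by
    apply aux_bdd19
    intro w hw heq
    exact h z₁ z₂ w h1 h2 hw
      (by rw [hCdef, hDdef, hEdef, hFdef] at heq; linear_combination heq)
  -- |z₂ D| ≤ |C|
  have hv : ‖z₂ * D‖ ≤ ‖C‖ := by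
    rw [norm_mul]
    calc ‖z₂‖ * ‖D‖ ≤ 1 * ‖C‖ :=
      mul_le_mul (le_of_lt h2) hD (norm_nonneg _) zero_le_one
    _ = ‖C‖ := one_mul _
  -- key scaling inequality
  have hK : r * ‖C - z₂ * D‖ ≤ ‖C - (r : ℂ) * (z₂ * D)‖ :=
    aux_sc19 C (z₂ * D) r hr0 (le_of_lt hr1) hv
  -- the shifted "A" term is bounded below
  have hA : ‖C‖ - r * ‖z₂‖ * ‖D‖
      ≤ ‖C - (r : ℂ) * (z₂ * D)‖ := by
    have := norm_sub_norm_le C ((r : ℂ) * (z₂ * D))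
    rw [norm_mul, norm_mul, Complex.norm_of_nonneg hr0] at this
    linarith [this]
  have hApos : (0:ℝ) < ‖C - (r : ℂ) * (z₂ * D)‖ := by
    have hrz : r * ‖z₂‖ < 1 := by
      nlinarith [norm_nonneg z₂, mul_nonneg (sub_nonneg.2 hr1.le) (norm_nonneg z₂)]
    have h2' : r * ‖z₂‖ * ‖D‖ < ‖C‖ := by
      nlinarith [mul_pos (sub_pos.2 hrz) hCpos,
        mul_nonneg (mul_nonneg hr0 (norm_nonneg z₂)) (sub_nonneg.2 hD)]
    linarith
  -- bound the z₃ part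
  have hz3 : ‖z₃ * ((r : ℂ) * (E - z₂ * F))‖
      < ‖C - (r : ℂ) * (z₂ * D)‖ := by
    rw [norm_mul, norm_mul, Complex.norm_of_nonneg hr0]
    calc ‖z₃‖ * (r * ‖E - z₂ * F‖)
        ≤ ‖z₃‖ * (r * ‖C - z₂ * D‖) := by
          apply mul_le_mul_of_nonneg_left _ (norm_nonneg z₃)
          exact mul_le_mul_of_nonneg_left hB hr0
      _ ≤ ‖z₃‖ * ‖C - (r : ℂ) * (z₂ * D)‖ :=
          mul_le_mul_of_nonneg_left hK (norm_nonneg z₃)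
      _ < 1 * ‖C - (r : ℂ) * (z₂ * D)‖ := by
          exact mul_lt_mul_of_pos_right h3 hApos
      _ = _ := one_mul _
  -- conclude
  intro heq
  have hzero : (C - (r : ℂ) * (z₂ * D)) - z₃ * ((r : ℂ) * (E - z₂ * F)) = 0 := by
    rw [hCdef, hDdef, hEdef, hFdef]
    linear_combination heq
  have := norm_sub_norm_le (C - (r : ℂ) * (z₂ * D)) (z₃ * ((r : ℂ) * (E - z₂ * F)))
  rw [hzero, norm_zero] at this
  linarith
end
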